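/- arXiv:2204.08118 — 2 statements merged into one kernel-verified Lean document; each statement's English description precedes it below -/
import Mathlib

section
/- Let m be an odd positive integer and n = 2m. For the power mapping F(x) = x^{2^m+2} over F_{2^n}, the differential spectrum is given by ω_0 = 2^n - 2^{n-2}, ω_1 = ω_2 = ω_3 = 0, ω_4 = 2^{n-2}, and ω_i = 0 for all i > 4; in particular δ(b) ∈ {0, 4} for every b ∈ F_{2^n}. -/
/-!
In characteristic `2`, `(x + 1) ^ (2 ^ m + 2) - x ^ (2 ^ m + 2) = L x + 1` with the additive map
`L x = x ^ 2 ^ m + x ^ 2`, so every nonempty fibre of the derivative is a coset of `ker L` and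
`δ(b) ∈ {0, #ker L}`. For `m` odd and `#F = 2 ^ (2 * m)`, the equation `x ^ 2 ^ m = x ^ 2` is
equivalent to `x ^ 4 = x`, so `ker L` is the copy of `𝔽₄` inside `F` and has `4` elements.
Counting the elements of `F` fibre by fibre then gives `ω₄ = 2 ^ (n - 2)`.
-/

open Finset

/-- The number of `x` in the field `F` with `(x+1)^d - x^d = b`. -/
def deltaF (F : Type*) [Field F] [Fintype F] [DecidableEq F] (d : ℕ) (b : F) : ℕ :=
  (Finset.univ.filter (fun x : F => (x + 1) ^ d - x ^ d = b)).card

/-- The number of `b` in the field `F` with `deltaF F d b = i`. -/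
def omegaF (F : Type*) [Field F] [Fintype F] [DecidableEq F] (d i : ℕ) : ℕ :=
  (Finset.univ.filter (fun b : F => deltaF F d b = i)).card

theorem add_one_pow_add_sub_pow {R : Type*} [CommRing R] (p : ℕ) [ExpChar R p] (i j : ℕ)
    (x : R) :
    (x + 1) ^ (p ^ i + p ^ j) - x ^ (p ^ i + p ^ j) = x ^ p ^ i + x ^ p ^ j + 1 := by
  rw [pow_add, pow_add, add_pow_expChar_pow, add_pow_expChar_pow, one_pow, one_pow]
  ring

theorem pow_pow_eq_pow_iff_pow_sq_eq_self {K : Type*} [Field K] [Fintype K] {p m : ℕ}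
    (hm : Odd m) (hK : Fintype.card K = p ^ (2 * m)) (x : K) :
    x ^ p ^ m = x ^ p ↔ x ^ p ^ 2 = x := by
  constructor
  · intro h
    calc x ^ p ^ 2 = (x ^ p ^ m) ^ p := by rw [h, ← pow_mul, sq]
      _ = (x ^ p) ^ p ^ m := by rw [← pow_mul, ← pow_mul, mul_comm]
      _ = (x ^ p ^ m) ^ p ^ m := by rw [h]
      _ = x := by rw [← pow_mul, ← pow_add, ← two_mul, ← hK, FiniteField.pow_card]
  · intro h
    obtain ⟨k, rfl⟩ := hm
    have hfix : x ^ p ^ (2 * k) = x := by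
      rw [pow_mul, ← congrFun (pow_iterate _ k) x]
      exact Function.iterate_fixed h k
    rw [pow_succ, pow_mul, hfix]

theorem card_filter_pow_eq_self {K : Type*} [Field K] [Fintype K] [DecidableEq K] {q : ℕ}
    (hq : 1 < q) (hdvd : q - 1 ∣ Fintype.card K - 1) : #{x : K | x ^ q = x} = q := by
  obtain ⟨r, rfl⟩ := Nat.exists_eq_add_one.mpr (by omega : 0 < q)
  rw [Nat.add_sub_cancel] at hdvd
  obtain ⟨ζ, hζ⟩ : ∃ ζ : Kˣ, orderOf ζ = r := by
    have hcard : #{ζ : Kˣ | orderOf ζ = r} = r.totient :=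
      IsCyclic.card_orderOf_eq_totient (by rwa [Fintype.card_units])
    obtain ⟨ζ, hζ⟩ := card_pos.mp (hcard ▸ Nat.totient_pos.mpr (by omega))
    exact ⟨ζ, (mem_filter.mp hζ).2⟩
  have hprim : IsPrimitiveRoot (ζ : K) r :=
    IsPrimitiveRoot.coe_units_iff.mpr (hζ ▸ IsPrimitiveRoot.orderOf ζ)
  have hroots : ({x : K | x ^ (r + 1) = x} : Finset K) =
      insert 0 (Polynomial.nthRootsFinset r (1 : K)) := by
    ext x
    rw [mem_filter, mem_insert, Polynomial.mem_nthRootsFinset (by omega)]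
    rcases eq_or_ne x 0 with rfl | hx
    · simp
    · simp [pow_succ, hx]
  rw [hroots, card_insert_of_notMem, hprim.card_nthRootsFinset]
  rw [Polynomial.mem_nthRootsFinset (by omega), zero_pow (by omega)]
  exact zero_ne_one

theorem card_filter_pow_two_pow_add_sq_eq_zero {K : Type*} [Field K] [Fintype K] [DecidableEq K]
    {m : ℕ} (hm : Odd m) (hK : Fintype.card K = 2 ^ (2 * m)) :
    #{x : K | x ^ 2 ^ m + x ^ 2 = 0} = 4 := by
  have : CharP K 2 := charP_of_card_eq_prime_pow hK
  have hpow := pow_pow_eq_pow_iff_pow_sq_eq_self hm hK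
  simp_rw [CharTwo.add_eq_zero, hpow]
  refine card_filter_pow_eq_self (by norm_num) ?_
  rw [hK, pow_mul]
  simpa using Nat.sub_dvd_pow_sub_pow 4 1 m

section Spectrum

variable {F : Type*} [Field F] [Fintype F] [DecidableEq F] {d : ℕ}

theorem deltaF_eq_zero_or_card_ker (L : F →+ F) (c : F)
    (hD : ∀ x, (x + 1) ^ d - x ^ d = L x + c) (b : F) :
    deltaF F d b = 0 ∨ deltaF F d b = #{x | L x = 0} := by
  have hfiber : deltaF F d b = #{x | L x = b - c} := by
    simp only [deltaF, hD, eq_sub_iff_add_eq]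
  rw [hfiber]
  by_cases hb : b - c ∈ Set.range L
  · exact Or.inr (AddMonoidHom.card_fiber_eq_of_mem_range L hb ⟨0, map_zero L⟩)
  · exact Or.inl (card_eq_zero.mpr (filter_eq_empty_iff.mpr fun x _ hx => hb ⟨x, hx⟩))

theorem deltaF_pow_add_pow_eq_zero_or (p : ℕ) [ExpChar F p] (i j : ℕ) (b : F) :
    deltaF F (p ^ i + p ^ j) b = 0 ∨
      deltaF F (p ^ i + p ^ j) b = #{x : F | x ^ p ^ i + x ^ p ^ j = 0} :=
  deltaF_eq_zero_or_card_ker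
    ((iterateFrobenius F p i).toAddMonoidHom + (iterateFrobenius F p j).toAddMonoidHom) 1
    (add_one_pow_add_sub_pow p i j) b

theorem sum_deltaF : ∑ b, deltaF F d b = Fintype.card F :=
  (card_eq_sum_card_fiberwise fun _ _ => mem_univ _).symm

theorem omegaF_mul_of_deltaF_eq_zero_or
    {k : ℕ} (h : ∀ b : F, deltaF F d b = 0 ∨ deltaF F d b = k) :
    omegaF F d k * k = Fintype.card F := by
  rw [← sum_deltaF (d := d), omegaF, card_eq_sum_ones, sum_mul, one_mul, sum_filter]
  refine sum_congr rfl fun b _ => ?_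
  split_ifs with hb
  · exact hb.symm
  · exact ((h b).resolve_right hb).symm

theorem omegaF_zero_add_omegaF_of_deltaF_eq_zero_or
    {k : ℕ} (h : ∀ b : F, deltaF F d b = 0 ∨ deltaF F d b = k) (hk : k ≠ 0) :
    omegaF F d 0 + omegaF F d k = Fintype.card F := by
  rw [omegaF, omegaF, ← card_univ,
    ← card_filter_add_card_filter_not (s := univ) (deltaF F d · = 0)]
  congr 2
  ext b
  rcases h b with hb | hb <;> simp [hb, hk, Ne.symm hk]

theorem omegaF_eq_zero_of_deltaF_eq_zero_or
    {k : ℕ} (h : ∀ b : F, deltaF F d b = 0 ∨ deltaF F d b = k)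
    {i : ℕ} (hi : i ≠ 0) (hik : i ≠ k) :
    omegaF F d i = 0 :=
  card_eq_zero.mpr <| filter_eq_empty_iff.mpr fun b _ hb => by
    rcases h b with h' | h' <;> omega

end Spectrum

theorem stmt5_general (m : ℕ) (hmo : Odd m) (n : ℕ) (hn : n = 2 * m)
    (F : Type*) [Field F] [Fintype F] [DecidableEq F]
    (hF : Fintype.card F = 2 ^ n) :
    omegaF F (2 ^ m + 2) 0 = 2 ^ n - 2 ^ (n - 2) ∧
    omegaF F (2 ^ m + 2) 1 = 0 ∧
    omegaF F (2 ^ m + 2) 2 = 0 ∧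
    omegaF F (2 ^ m + 2) 3 = 0 ∧
    omegaF F (2 ^ m + 2) 4 = 2 ^ (n - 2) ∧
    (∀ i, 4 < i → omegaF F (2 ^ m + 2) i = 0) ∧
    (∀ b : F, deltaF F (2 ^ m + 2) b ∈ ({0, 4} : Set ℕ)) := by
  subst hn
  have : CharP F 2 := charP_of_card_eq_prime_pow hF
  have hspec (b : F) : deltaF F (2 ^ m + 2) b = 0 ∨ deltaF F (2 ^ m + 2) b = 4 := by
    rw [← card_filter_pow_two_pow_add_sq_eq_zero hmo hF]
    simpa only [pow_one] using deltaF_pow_add_pow_eq_zero_or 2 m 1 b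
  have hω4 : omegaF F (2 ^ m + 2) 4 = 2 ^ (2 * m - 2) := by
    have h := omegaF_mul_of_deltaF_eq_zero_or hspec
    rw [hF, ← Nat.sub_add_cancel (by grind : 2 ≤ 2 * m), pow_add] at h
    exact Nat.eq_of_mul_eq_mul_right (by norm_num) h
  have hω0 := omegaF_zero_add_omegaF_of_deltaF_eq_zero_or hspec four_ne_zero
  have hω_other {i : ℕ} (h0 : i ≠ 0) (h4 : i ≠ 4) : omegaF F (2 ^ m + 2) i = 0 :=
    omegaF_eq_zero_of_deltaF_eq_zero_or hspec h0 h4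
  rw [hF] at hω0
  refine ⟨by omega, hω_other one_ne_zero (by norm_num), hω_other two_ne_zero (by norm_num),
    hω_other three_ne_zero (by norm_num), hω4, fun i hi => hω_other (by omega) (by omega),
    fun b => ?_⟩
  rcases hspec b with hb | hb <;> simp [hb]

/-- Differential spectrum of `x^(2^m+2)` over `F_{2^n}`, `n = 2m`, `m` odd. -/
theorem stmt5 (m : ℕ) (hm : 0 < m) (hmo : Odd m) (n : ℕ) (hn : n = 2 * m)
    (F : Type*) [Field F] [Fintype F] [DecidableEq F]
    (hF : Fintype.card F = 2 ^ n) :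
    omegaF F (2 ^ m + 2) 0 = 2 ^ n - 2 ^ (n - 2) ∧
    omegaF F (2 ^ m + 2) 1 = 0 ∧
    omegaF F (2 ^ m + 2) 2 = 0 ∧
    omegaF F (2 ^ m + 2) 3 = 0 ∧
    omegaF F (2 ^ m + 2) 4 = 2 ^ (n - 2) ∧
    (∀ i, 4 < i → omegaF F (2 ^ m + 2) i = 0) ∧
    (∀ b : F, deltaF F (2 ^ m + 2) b ∈ ({0, 4} : Set ℕ)) :=
  stmt5_general m hmo n hn F hF
end

section
/- Let p > 3 be a prime, m a positive integer, and n = 2m. For the power mapping F(x) = x^{p^m+2} over F_{p^n} and b ∈ F_{p^n}, one has δ(b) = 1 if and only if b = 1/4. -/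
section OddPower

variable {F : Type*} [Field F]

theorem add_one_pow_sub_pow_neg_sub_one {d : ℕ} (hd : Odd d) (x : F) :
    (-1 - x + 1) ^ d - (-1 - x) ^ d = (x + 1) ^ d - x ^ d := by
  rw [show -1 - x + 1 = -x by ring, show -1 - x = -(x + 1) by ring, hd.neg_pow, hd.neg_pow]
  ring

theorem eq_of_deltaF_eq_one [Fintype F] [DecidableEq F] (h2 : (2 : F) ≠ 0) {d : ℕ}
    (hd : Odd d) {b : F} (hb : deltaF F d b = 1) : b = (-2⁻¹ + 1) ^ d - (-2⁻¹) ^ d := by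
  obtain ⟨a, ha⟩ := Finset.card_eq_one.mp hb
  have mem : ∀ x, (x + 1) ^ d - x ^ d = b ↔ x = a := fun x => by
    simpa [deltaF] using Finset.ext_iff.mp ha x
  have hfixed : -1 - a = a :=
    (mem _).mp ((add_one_pow_sub_pow_neg_sub_one hd a).trans ((mem a).mpr rfl))
  have ha : a = -2⁻¹ := by
    field_simp
    linear_combination -hfixed
  exact ha ▸ ((mem a).mpr rfl).symm

end OddPower

section Frobenius

variable {F : Type*} [Field F] (p : ℕ) [ExpChar F p] (m : ℕ)

theorem add_pow_sub_sub_pow_expChar_pow_add_two {h : F} (hh : h ^ p ^ m = h) (y : F) :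
    (y + h) ^ (p ^ m + 2) - (y - h) ^ (p ^ m + 2) =
      4 * h * y ^ (p ^ m + 1) + 2 * h * y ^ 2 + 2 * h ^ 3 := by
  rw [pow_add, pow_add, add_pow_expChar_pow, sub_pow_expChar_pow, hh]
  ring

theorem two_pow_expChar_pow : (2 : F) ^ p ^ m = 2 :=
  map_ofNat (iterateFrobenius F p m) 2

theorem inv_two_pow_expChar_pow : (2⁻¹ : F) ^ p ^ m = 2⁻¹ := by
  rw [inv_pow, two_pow_expChar_pow]

theorem add_one_pow_sub_pow_expChar_pow_add_two (h2 : (2 : F) ≠ 0) (x : F) :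
    (x + 1) ^ (p ^ m + 2) - x ^ (p ^ m + 2) =
      2 * (x + 2⁻¹) ^ (p ^ m + 1) + (x + 2⁻¹) ^ 2 + 4⁻¹ := by
  have key := add_pow_sub_sub_pow_expChar_pow_add_two p m (inv_two_pow_expChar_pow p m) (x + 2⁻¹)
  rw [show x + 2⁻¹ + 2⁻¹ = x + 1 by field_simp; ring, add_sub_cancel_right] at key
  rw [key, show (4 : F)⁻¹ = 2⁻¹ ^ 2 by norm_num]
  generalize x + 2⁻¹ = y
  field_simp
  ring

theorem eq_zero_of_two_mul_pow_add_self (h3 : (3 : F) ≠ 0) {y : F}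
    (hy : (y ^ p ^ m) ^ p ^ m = y) (h : 2 * y ^ p ^ m + y = 0) : y = 0 := by
  have hconj : 2 * y + y ^ p ^ m = 0 := by
    have := congrArg (· ^ p ^ m) h
    rw [zero_pow (expChar_pow_pos F p m).ne'] at this
    simpa [add_pow_expChar_pow, mul_pow, two_pow_expChar_pow, hy] using this
  have h3y : 3 * y = 0 := by linear_combination 2 * hconj - h
  exact (mul_eq_zero.mp h3y).resolve_left h3

theorem add_one_pow_sub_pow_eq_inv_four_iff (h2 : (2 : F) ≠ 0) (h3 : (3 : F) ≠ 0)
    (hinv : ∀ y : F, (y ^ p ^ m) ^ p ^ m = y) (x : F) :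
    (x + 1) ^ (p ^ m + 2) - x ^ (p ^ m + 2) = 4⁻¹ ↔ x = -2⁻¹ := by
  rw [add_one_pow_sub_pow_expChar_pow_add_two p m h2, add_eq_right]
  constructor
  · intro hx
    have hfac : (x + 2⁻¹) * (2 * (x + 2⁻¹) ^ p ^ m + (x + 2⁻¹)) = 0 := by
      linear_combination hx
    rcases mul_eq_zero.mp hfac with hy | hy
    · linear_combination hy
    · linear_combination eq_zero_of_two_mul_pow_add_self p m h3 (hinv _) hy
  · rintro rfl
    simp

theorem deltaF_inv_four [Fintype F] [DecidableEq F] (h2 : (2 : F) ≠ 0) (h3 : (3 : F) ≠ 0)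
    (hinv : ∀ y : F, (y ^ p ^ m) ^ p ^ m = y) : deltaF F (p ^ m + 2) 4⁻¹ = 1 := by
  rw [deltaF, Finset.card_eq_one]
  exact ⟨-2⁻¹, by ext x; simp [add_one_pow_sub_pow_eq_inv_four_iff p m h2 h3 hinv]⟩

end Frobenius

theorem stmt9_general (p : ℕ) (hp : p.Prime) (hp3 : 3 < p) (m : ℕ) (n : ℕ)
    (hn : n = 2 * m)
    (F : Type*) [Field F] [Fintype F] [DecidableEq F]
    (hF : Fintype.card F = p ^ n) :
    ∀ b : F, deltaF F (p ^ m + 2) b = 1 ↔ b = (4 : F)⁻¹ := by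
  have : Fact p.Prime := ⟨hp⟩
  have : CharP F p := charP_of_card_eq_prime_pow hF
  have cast_ne_zero : ∀ k : ℕ, 0 < k → k < p → (k : F) ≠ 0 := fun k hk hkp => by
    rw [Ne, CharP.cast_eq_zero_iff F p]
    exact Nat.not_dvd_of_pos_of_lt hk hkp
  have h2 : (2 : F) ≠ 0 := by exact_mod_cast cast_ne_zero 2 two_pos (by omega)
  have h3 : (3 : F) ≠ 0 := by exact_mod_cast cast_ne_zero 3 three_pos hp3
  have hinv : ∀ y : F, (y ^ p ^ m) ^ p ^ m = y := fun y => by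
    rw [← pow_mul, ← pow_add, ← two_mul, ← hn, ← hF, FiniteField.pow_card]
  have hodd : Odd (p ^ m + 2) := (hp.odd_of_ne_two (by omega)).pow.add_even even_two
  intro b
  constructor
  · intro hb
    rw [eq_of_deltaF_eq_one h2 hodd hb, add_one_pow_sub_pow_expChar_pow_add_two p m h2]
    simp
  · rintro rfl
    exact deltaF_inv_four p m h2 h3 hinv

/-- For `x^(p^m+2)` over `F_{p^n}` with `p > 3` prime and `n = 2m`:
`δ(b) = 1` if and only if `b = 1/4`. -/
theorem stmt9 (p : ℕ) (hp : p.Prime) (hp3 : 3 < p) (m : ℕ) (hm : 0 < m) (n : ℕ)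
    (hn : n = 2 * m)
    (F : Type*) [Field F] [Fintype F] [DecidableEq F]
    (hF : Fintype.card F = p ^ n) :
    ∀ b : F, deltaF F (p ^ m + 2) b = 1 ↔ b = (4 : F)⁻¹ :=
  stmt9_general p hp hp3 m n hn F hF
end
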